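/- Let Ψ = (ψ_k)_{k∈ℕ} be a sequence with ψ_k ∈ (−π/2, π/2), set F_n := i·tan(ψ_{|n|}) for n ∈ ℤ, and for d ≥ 0 let G_d be the SU(2) nonlinear Fourier series (as a 2×2 matrix-valued Laurent polynomial) of the truncated sequence (F_n · 1_{−d ≤ n ≤ d}). Let M := 2^(−1/2)·[[1,1],[1,−1]]. Then for every x ∈ [0,1], with θ ∈ [0, π/2] the unique number with cos θ = x and z := e^(2iθ), and for every d ≥ 0: M · U_d(Ψ,x) · M = diag(e^(idθ), e^(−idθ)) · G_d(z) · diag(e^(idθ), e^(−idθ)). -/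

import Mathlib

open MeasureTheory Filter

noncomputable section

/-- The Pauli matrix `Z`. -/
def Zmat : Matrix (Fin 2) (Fin 2) ℂ := !![1, 0; 0, -1]

/-- The matrix `W(x) = [[x, i√(1-x²)],[i√(1-x²), x]]`. -/
def Wmat (x : ℝ) : Matrix (Fin 2) (Fin 2) ℂ :=
  !![(x : ℂ), Complex.I * Real.sqrt (1 - x ^ 2); Complex.I * Real.sqrt (1 - x ^ 2), (x : ℂ)]

/-- The QSP recursion: `U_0 = e^{iψ₀Z}` and
`U_d = e^{iψ_d Z} W(x) U_{d-1} W(x) e^{iψ_d Z}`. -/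
def Umat (ψ : ℕ → ℝ) (x : ℝ) : ℕ → Matrix (Fin 2) (Fin 2) ℂ
  | 0 => NormedSpace.exp ((Complex.I * (ψ 0 : ℂ)) • Zmat)
  | d + 1 =>
      NormedSpace.exp ((Complex.I * (ψ (d + 1) : ℂ)) • Zmat) * Wmat x * Umat ψ x d *
        Wmat x * NormedSpace.exp ((Complex.I * (ψ (d + 1) : ℂ)) • Zmat)

/-- `u_d(Ψ,x)`: the upper left entry of `U_d(Ψ,x)`. -/
def uQSP (ψ : ℕ → ℝ) (x : ℝ) (d : ℕ) : ℂ := Umat ψ x d 0 0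

/-- The Hilbert space norm `‖g‖ = ((2/π) ∫₀¹ |g(x)|² dx/√(1-x²))^{1/2}`. -/
def qspNorm (g : ℝ → ℝ) : ℝ :=
  Real.sqrt ((2 / Real.pi) * ∫ x in (0:ℝ)..1, g x ^ 2 / Real.sqrt (1 - x ^ 2))

/-- The phase sequence `ψ` represents the signal `f`: all phases lie in `(-π/2,π/2)`,
the Plancherel identity `∑_{k∈ℤ} log(1+tan²ψ_{|k|}) = -(2/π)∫₀¹ log(1-f(x)²) dx/√(1-x²)`
holds, and `Im u_d(Ψ,·) → f` in the Hilbert space norm as `d → ∞`. -/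
def QSPRepresents (f : ℝ → ℝ) (ψ : ℕ → ℝ) : Prop :=
  (∀ k, ψ k ∈ Set.Ioo (-(Real.pi / 2)) (Real.pi / 2)) ∧
  Summable (fun k : ℕ => Real.log (1 + Real.tan (ψ (k + 1)) ^ 2)) ∧
  Real.log (1 + Real.tan (ψ 0) ^ 2) +
      2 * ∑' k : ℕ, Real.log (1 + Real.tan (ψ (k + 1)) ^ 2) =
    -(2 / Real.pi) * ∫ x in (0:ℝ)..1, Real.log (1 - f x ^ 2) / Real.sqrt (1 - x ^ 2) ∧
  Tendsto (fun d : ℕ => qspNorm (fun x => (uQSP ψ x d).im - f x)) atTop (nhds 0)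

/-- The matrix `M = 2^{-1/2} [[1,1],[1,-1]]`. -/
def Mmat : Matrix (Fin 2) (Fin 2) ℂ :=
  (((Real.sqrt 2)⁻¹ : ℝ) : ℂ) • !![1, 1; 1, -1]

/-- The SU(2) NLFT factor `(1+|F n|²)^{-1/2} · [[1, F n zⁿ],[−conj(F n) z⁻ⁿ, 1]]`. -/
def nlftFactor (F : ℤ → ℂ) (n : ℤ) (z : ℂ) : Matrix (Fin 2) (Fin 2) ℂ :=
  (((Real.sqrt (1 + ‖F n‖ ^ 2))⁻¹ : ℝ) : ℂ) •
    !![1, F n * z ^ n; -(starRingEnd ℂ (F n)) * z ^ (-n), 1]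

/-- Ordered product of the NLFT factors for `-K ≤ n ≤ K`. -/
def nlftPartial (F : ℤ → ℂ) (K : ℕ) (z : ℂ) : Matrix (Fin 2) (Fin 2) ℂ :=
  (((List.range (2 * K + 1)).map (fun j => nlftFactor F ((j : ℤ) - (K : ℤ)) z)).prod)

open Classical in
/-- A bound for the support of a finitely supported sequence. -/
def suppBound (F : ℤ → ℂ) : ℕ :=
  if h : (Function.support F).Finite then h.toFinset.sup (fun n => n.natAbs) else 0

/-- The SU(2) nonlinear Fourier series of a finitely supported sequence `F : ℤ → ℂ`,
evaluated at `z`: the ordered product over increasing `n` of the factors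
`(1+|F n|²)^{-1/2} · [[1, F n zⁿ],[−conj(F n) z⁻ⁿ, 1]]`. -/
def nlft (F : ℤ → ℂ) (z : ℂ) : Matrix (Fin 2) (Fin 2) ℂ := nlftPartial F (suppBound F) z

/-- First entry `a(z)` of the nonlinear Fourier series. -/
def nlftA (F : ℤ → ℂ) (z : ℂ) : ℂ := nlft F z 0 0

/-- Second entry `b(z)` of the nonlinear Fourier series. -/
def nlftB (F : ℤ → ℂ) (z : ℂ) : ℂ := nlft F z 0 1

/-!
Conjugation by `M` turns `e^{iψZ}` into the rotation `R(ψ) = e^{iψX}` and `W(cos θ) = R(θ)`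
into `D = e^{iθZ}`, so `M U_d M = R(ψ_d) D (M U_{d-1} M) D R(ψ_d)`. For `z = e^{2iθ}` the
factor of `Fₙ = i tan ψ_{|n|}` is `Dⁿ R(ψ_{|n|}) D⁻ⁿ`, so the partial product over `|n| ≤ d`,
conjugated by `D^d`, satisfies the same recursion: the outer factors `D^{±(d+1)}` cancel
against `D^{d+1} = D · D^d`.
-/

open Complex

def diagExp (w : ℂ) : Matrix (Fin 2) (Fin 2) ℂ := !![exp w, 0; 0, exp (-w)]

lemma diagExp_zero : diagExp 0 = 1 := by
  simp [diagExp, Matrix.one_fin_two]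

lemma diagExp_add (a b : ℂ) : diagExp (a + b) = diagExp a * diagExp b := by
  simp [diagExp, exp_add, mul_comm]

lemma diagExp_mul_diagExp_neg (w : ℂ) : diagExp w * diagExp (-w) = 1 := by
  rw [← diagExp_add, add_neg_cancel, diagExp_zero]

lemma diagExp_neg_mul_diagExp (w : ℂ) : diagExp (-w) * diagExp w = 1 := by
  rw [← diagExp_add, neg_add_cancel, diagExp_zero]

lemma exp_smul_Zmat (w : ℂ) : NormedSpace.exp (w • Zmat) = diagExp w := by
  have hdiag : w • Zmat = Matrix.diagonal ![w, -w] := by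
    ext i j; fin_cases i <;> fin_cases j <;> simp [Zmat]
  rw [hdiag, Matrix.exp_diagonal, diagExp]
  ext i j; fin_cases i <;> fin_cases j <;> simp [← Complex.exp_eq_exp_ℂ]

lemma diagExp_mul_mul_diagExp_neg (w a b c d : ℂ) :
    diagExp w * !![a, b; c, d] * diagExp (-w) =
      !![a, exp (2 * w) * b; exp (-(2 * w)) * c, d] := by
  have h := exp_ne_zero w
  simp only [diagExp, Matrix.mul_fin_two, two_mul, exp_add, neg_add, exp_neg]
  ext i j; fin_cases i <;> fin_cases j <;> (simp; field_simp)

def rotX (t : ℝ) : Matrix (Fin 2) (Fin 2) ℂ :=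
  !![(Real.cos t : ℂ), I * Real.sin t; I * Real.sin t, Real.cos t]

lemma Mmat_mul_mul_Mmat (a b c d : ℂ) :
    Mmat * !![a, b; c, d] * Mmat =
      (2⁻¹ : ℂ) • !![a + b + c + d, a - b + c - d; a + b - c - d, a - b - c + d] := by
  have h : (((√2)⁻¹ : ℝ) : ℂ) * (((√2)⁻¹ : ℝ) : ℂ) = 2⁻¹ := by
    rw [← ofReal_mul, ← mul_inv, Real.mul_self_sqrt zero_le_two]; norm_num
  rw [Mmat, Matrix.smul_mul, Matrix.mul_smul, Matrix.smul_mul, smul_smul, h]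
  simp only [Matrix.mul_fin_two]
  congr 1
  ext i j; fin_cases i <;> fin_cases j <;> simp <;> ring

lemma Mmat_mul_Mmat : Mmat * Mmat = 1 := by
  have h := Mmat_mul_mul_Mmat 1 0 0 1
  rw [← Matrix.one_fin_two, mul_one] at h
  rw [h, Matrix.one_fin_two]
  ext i j; fin_cases i <;> fin_cases j <;> norm_num

lemma rotX_eq_Mmat_mul_diagExp_mul_Mmat (t : ℝ) :
    rotX t = Mmat * diagExp (I * t) * Mmat := by
  rw [diagExp, Mmat_mul_mul_Mmat, mul_comm I, ← neg_mul, exp_mul_I, exp_mul_I, cos_neg, sin_neg,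
    rotX, ← ofReal_cos, ← ofReal_sin]
  ext i j; fin_cases i <;> fin_cases j <;> simp <;> ring

lemma Mmat_mul_mul_mul_Mmat (A B : Matrix (Fin 2) (Fin 2) ℂ) :
    Mmat * (A * B) * Mmat = (Mmat * A * Mmat) * (Mmat * B * Mmat) := by
  simp only [Matrix.mul_assoc, ← Matrix.mul_assoc Mmat Mmat, Mmat_mul_Mmat, Matrix.one_mul]

lemma Mmat_mul_rotX_mul_Mmat (t : ℝ) : Mmat * rotX t * Mmat = diagExp (I * t) := by
  simp only [rotX_eq_Mmat_mul_diagExp_mul_Mmat, Matrix.mul_assoc, Mmat_mul_Mmat, Matrix.mul_one,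
    ← Matrix.mul_assoc Mmat Mmat, Matrix.one_mul]

lemma Mmat_mul_exp_smul_Zmat_mul_Mmat (t : ℝ) :
    Mmat * NormedSpace.exp ((I * t) • Zmat) * Mmat = rotX t := by
  rw [exp_smul_Zmat, rotX_eq_Mmat_mul_diagExp_mul_Mmat]

lemma Wmat_cos {θ : ℝ} (h₀ : 0 ≤ θ) (hπ : θ ≤ Real.pi) : Wmat (Real.cos θ) = rotX θ := by
  rw [Wmat, rotX, ← Real.sin_eq_sqrt_one_sub_cos_sq h₀ hπ]

lemma nlftFactor_of_eq_zero {F : ℤ → ℂ} {n : ℤ} (h : F n = 0) (z : ℂ) :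
    nlftFactor F n z = 1 := by
  simp [nlftFactor, h, Matrix.one_fin_two]

lemma nlftFactor_of_eq_I_mul_tan {F : ℤ → ℂ} {n : ℤ} {t : ℝ} (hc : 0 < Real.cos t)
    (hF : F n = I * Real.tan t) (w : ℂ) :
    nlftFactor F n (exp (2 * w)) = diagExp (n * w) * rotX t * diagExp (-(n * w)) := by
  have hnorm : ‖F n‖ ^ 2 = Real.tan t ^ 2 := by
    rw [hF, norm_mul, norm_I, one_mul, norm_real, Real.norm_eq_abs, sq_abs]
  have hcoef : ((√(1 + ‖F n‖ ^ 2))⁻¹ : ℝ) = Real.cos t := by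
    rw [hnorm, Real.inv_sqrt_one_add_tan_sq hc]
  have hsin : cos (t : ℂ) * tan (t : ℂ) = sin t := by
    exact_mod_cast (show Real.cos t * Real.tan t = Real.sin t by
      rw [Real.tan_eq_sin_div_cos, mul_div_cancel₀ _ hc.ne'])
  have hconj : starRingEnd ℂ (tan (t : ℂ)) = tan t := by rw [← ofReal_tan, conj_ofReal]
  have hexp : (n : ℂ) * (2 * w) = 2 * (n * w) := by ring
  rw [rotX, diagExp_mul_mul_diagExp_neg, nlftFactor, hcoef, hF, ← exp_int_mul, ← exp_int_mul]
  ext i j; fin_cases i <;> fin_cases j <;> simp [hconj, hexp]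
  · linear_combination (I * exp (2 * (n * w))) * hsin
  · linear_combination (I * exp (-(2 * (n * w)))) * hsin

-- The cast `(j : ℤ)` in `nlftPartial` makes Lean coerce the list `List.range (2 * K + 1)`
-- itself to `List ℤ`.
lemma nlftPartial_eq_prod_range (F : ℤ → ℂ) (K : ℕ) (z : ℂ) :
    nlftPartial F K z =
      ((List.range (2 * K + 1)).map fun j : ℕ => nlftFactor F (j - K) z).prod := by
  have hcast : (do let a ← List.range (2 * K + 1); pure (a : ℤ)) =
      (List.range (2 * K + 1)).map ((↑) : ℕ → ℤ) :=
    List.flatMap_pure_eq_map _ _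
  rw [nlftPartial, hcast, List.map_map]
  rfl

lemma nlftPartial_zero (F : ℤ → ℂ) (z : ℂ) : nlftPartial F 0 z = nlftFactor F 0 z := by
  simp [nlftPartial_eq_prod_range]

lemma nlftPartial_succ (F : ℤ → ℂ) (K : ℕ) (z : ℂ) :
    nlftPartial F (K + 1) z =
      nlftFactor F (-(K + 1 : ℕ)) z * nlftPartial F K z * nlftFactor F (K + 1 : ℕ) z := by
  rw [nlftPartial_eq_prod_range, nlftPartial_eq_prod_range,
    show 2 * (K + 1) + 1 = 2 * K + 1 + 1 + 1 by ring, List.range_succ, List.range_succ_eq_map]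
  simp only [List.map_append, List.map_cons, List.map_map, List.prod_append, List.prod_cons,
    List.map_nil, List.prod_nil, mul_one]
  have hshift : (fun j : ℕ => nlftFactor F (j - (K + 1 : ℕ)) z) ∘ Nat.succ =
      fun j : ℕ => nlftFactor F (j - K) z := by
    funext j; simp
  rw [hshift, show ((0 : ℕ) : ℤ) - (K + 1 : ℕ) = -(K + 1 : ℕ) by simp,
    show ((2 * K + 2 : ℕ) : ℤ) - (K + 1 : ℕ) = (K + 1 : ℕ) by push_cast; ring]

lemma nlftPartial_congr {F G : ℤ → ℂ} {K : ℕ} (h : ∀ n : ℤ, n.natAbs ≤ K → F n = G n)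
    (z : ℂ) : nlftPartial F K z = nlftPartial G K z := by
  simp only [nlftPartial_eq_prod_range]
  congr 1
  refine List.map_congr_left fun j hj => ?_
  have hj : j < 2 * K + 1 := List.mem_range.mp hj
  rw [nlftFactor, nlftFactor, h _ (by omega)]

lemma nlftPartial_eq_of_le {F : ℤ → ℂ} {K L : ℕ} (hKL : K ≤ L)
    (h : ∀ n : ℤ, K < n.natAbs → F n = 0) (z : ℂ) : nlftPartial F L z = nlftPartial F K z := by
  induction L, hKL using Nat.le_induction with
  | base => rfl
  | succ L hKL ih =>
    rw [nlftPartial_succ, ih, nlftFactor_of_eq_zero (h _ (by omega)),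
      nlftFactor_of_eq_zero (h _ (by omega)), Matrix.one_mul, Matrix.mul_one]

lemma support_finite_of_eq_zero_of_natAbs_gt {F : ℤ → ℂ} {K : ℕ}
    (h : ∀ n : ℤ, K < n.natAbs → F n = 0) : (Function.support F).Finite :=
  (Set.finite_Icc (-(K : ℤ)) K).subset fun n hn => by
    by_contra hn'
    exact hn (h n (by simp only [Set.mem_Icc, not_and_or, not_le] at hn'; omega))

lemma suppBound_le {F : ℤ → ℂ} {K : ℕ} (h : ∀ n : ℤ, K < n.natAbs → F n = 0) :
    suppBound F ≤ K := by
  rw [suppBound, dif_pos (support_finite_of_eq_zero_of_natAbs_gt h)]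
  refine Finset.sup_le fun n hn => ?_
  by_contra hK
  exact (Set.Finite.mem_toFinset _ |>.mp hn) (h n (by omega))

lemma eq_zero_of_suppBound_lt {F : ℤ → ℂ} (hF : (Function.support F).Finite) {n : ℤ}
    (hn : suppBound F < n.natAbs) : F n = 0 := by
  by_contra hn0
  have hle : n.natAbs ≤ suppBound F := by
    rw [suppBound, dif_pos hF]
    exact Finset.le_sup (f := Int.natAbs) (hF.mem_toFinset.mpr hn0)
  omega

lemma nlft_eq_nlftPartial {F : ℤ → ℂ} {K : ℕ} (h : ∀ n : ℤ, K < n.natAbs → F n = 0)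
    (z : ℂ) : nlft F z = nlftPartial F K z :=
  (nlftPartial_eq_of_le (suppBound_le h)
    (fun _ => eq_zero_of_suppBound_lt (support_finite_of_eq_zero_of_natAbs_gt h)) z).symm

lemma diagExp_mul_nlftPartial_succ_mul_diagExp {F : ℤ → ℂ} {K : ℕ} {t : ℝ}
    (hc : 0 < Real.cos t) (hneg : F (-(K + 1 : ℕ)) = I * Real.tan t)
    (hpos : F (K + 1 : ℕ) = I * Real.tan t) (w : ℂ) :
    diagExp ((K + 1 : ℕ) * w) * nlftPartial F (K + 1) (exp (2 * w)) *
        diagExp ((K + 1 : ℕ) * w) =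
      rotX t * diagExp w *
        (diagExp (K * w) * nlftPartial F K (exp (2 * w)) * diagExp (K * w)) *
        diagExp w * rotX t := by
  set D := diagExp ((K + 1 : ℕ) * w) with hD
  set D' := diagExp (-((K + 1 : ℕ) * w))
  have hcast : ((-((K + 1 : ℕ) : ℤ) : ℤ) : ℂ) * w = -((K + 1 : ℕ) * w) := by
    push_cast; ring
  have hleft : D = diagExp w * diagExp (K * w) := by
    rw [hD, ← diagExp_add]; congr 1; push_cast; ring
  have hright : D = diagExp (K * w) * diagExp w := by
    rw [hD, ← diagExp_add]; congr 1; push_cast; ring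
  rw [nlftPartial_succ, nlftFactor_of_eq_I_mul_tan hc hneg, nlftFactor_of_eq_I_mul_tan hc hpos,
    hcast, neg_neg, Int.cast_natCast]
  calc D * (D' * rotX t * D * nlftPartial F K (exp (2 * w)) * (D * rotX t * D')) * D
      = (D * D') * rotX t * D * nlftPartial F K (exp (2 * w)) * D * rotX t * (D' * D) := by
        simp only [Matrix.mul_assoc]
    _ = _ := by
        rw [diagExp_mul_diagExp_neg, diagExp_neg_mul_diagExp, Matrix.one_mul, Matrix.mul_one]
        nth_rw 1 [hleft]; rw [hright]; simp only [Matrix.mul_assoc]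

theorem Mmat_mul_Umat_mul_Mmat {ψ : ℕ → ℝ} (hψ : ∀ k, 0 < Real.cos (ψ k)) {θ : ℝ}
    (h₀ : 0 ≤ θ) (hπ : θ ≤ Real.pi) (d : ℕ) :
    Mmat * Umat ψ (Real.cos θ) d * Mmat =
      diagExp (d * (I * θ)) *
        nlftPartial (fun n => I * Real.tan (ψ n.natAbs)) d (exp (2 * (I * θ))) *
        diagExp (d * (I * θ)) := by
  induction d with
  | zero =>
    rw [Umat, Mmat_mul_exp_smul_Zmat_mul_Mmat, nlftPartial_zero,
      nlftFactor_of_eq_I_mul_tan (hψ 0) rfl]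
    simp [diagExp_zero]
  | succ d ih =>
    rw [Umat, Mmat_mul_mul_mul_Mmat, Mmat_mul_mul_mul_Mmat, Mmat_mul_mul_mul_Mmat,
      Mmat_mul_mul_mul_Mmat, Mmat_mul_exp_smul_Zmat_mul_Mmat, Wmat_cos h₀ hπ,
      Mmat_mul_rotX_mul_Mmat, ih, diagExp_mul_nlftPartial_succ_mul_diagExp (t := ψ (d + 1)) (hψ _)
        (by simp only [Int.natAbs_neg, Int.natAbs_natCast]) rfl]

theorem qsp_eq_nlfs_general (ψ : ℕ → ℝ) (hψ : ∀ k, ψ k ∈ Set.Ioo (-(Real.pi / 2)) (Real.pi / 2))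
    (x : ℝ) (θ : ℝ) (hθ : θ ∈ Set.Icc (0:ℝ) (Real.pi / 2))
    (hcos : Real.cos θ = x) (d : ℕ) :
    Mmat * Umat ψ x d * Mmat =
      !![Complex.exp (Complex.I * d * θ), 0; 0, Complex.exp (-(Complex.I * d * θ))] *
        nlft (fun n : ℤ => if n.natAbs ≤ d then Complex.I * Real.tan (ψ n.natAbs) else 0)
          (Complex.exp (2 * Complex.I * θ)) *
        !![Complex.exp (Complex.I * d * θ), 0; 0, Complex.exp (-(Complex.I * d * θ))] := by
  subst hcos
  have htrunc : nlft (fun n : ℤ => if n.natAbs ≤ d then I * Real.tan (ψ n.natAbs) else 0)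
      (exp (2 * (I * θ))) =
        nlftPartial (fun n => I * Real.tan (ψ n.natAbs)) d (exp (2 * (I * θ))) := by
    rw [nlft_eq_nlftPartial (K := d) fun n hn => if_neg (by omega)]
    exact nlftPartial_congr (fun n hn => if_pos hn) _
  rw [show I * d * θ = d * (I * θ) by ring, show 2 * I * θ = 2 * (I * θ) by ring, htrunc]
  exact Mmat_mul_Umat_mul_Mmat (fun k => Real.cos_pos_of_mem_Ioo (hψ k)) hθ.1
    (hθ.2.trans (by linarith [Real.pi_pos])) d

/-- Lemma `qspnlfs` of the paper: conjugating the QSP product by `M`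
gives the nonlinear Fourier series of the truncation of `Fₙ = i tan ψ_{|n|}`, up to
diagonal factors. -/
theorem qsp_eq_nlfs (ψ : ℕ → ℝ) (hψ : ∀ k, ψ k ∈ Set.Ioo (-(Real.pi / 2)) (Real.pi / 2))
    (x : ℝ) (hx : x ∈ Set.Icc (0:ℝ) 1) (θ : ℝ) (hθ : θ ∈ Set.Icc (0:ℝ) (Real.pi / 2))
    (hcos : Real.cos θ = x) (d : ℕ) :
    Mmat * Umat ψ x d * Mmat =
      !![Complex.exp (Complex.I * d * θ), 0; 0, Complex.exp (-(Complex.I * d * θ))] *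
        nlft (fun n : ℤ => if n.natAbs ≤ d then Complex.I * Real.tan (ψ n.natAbs) else 0)
          (Complex.exp (2 * Complex.I * θ)) *
        !![Complex.exp (Complex.I * d * θ), 0; 0, Complex.exp (-(Complex.I * d * θ))] :=
  qsp_eq_nlfs_general ψ hψ x θ hθ hcos d
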